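/- arXiv:2306.06868 — 2 statements merged into one kernel-verified Lean document; each statement's English description precedes it below -/
import Mathlib

section
/- Let 0 < δ < 1 and 0 < ε < δ/8. Define the truncation map G_{2δ,ε} : ℝⁿ → ℝⁿ by G_{2δ,ε}(z) = (√(ε² + |z|²) − 2δ)₊ · z/|z| for z ≠ 0 and G_{2δ,ε}(0) = 0. Then G_{2δ,ε} is Lipschitz continuous with Lipschitz constant c† = 1 + 64/√255, i.e. |G_{2δ,ε}(z₁) − G_{2δ,ε}(z₂)| ≤ c† |z₁ − z₂| for all z₁, z₂ ∈ ℝⁿ. -/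
/-!
The map is radial, `z ↦ (g ‖z‖ / ‖z‖) • z`, with profile `g r = (√(ε² + r²) - 2δ)₊`, which is
1-Lipschitz and vanishes at `0` because `ε < 2δ`. Any such radial map is 3-Lipschitz: for
`‖y‖ ≤ ‖x‖`, split its increment into a radial part, bounded by `|g ‖x‖ - g ‖y‖| ≤ ‖x - y‖`,
and an angular part `g ‖y‖ • (x / ‖x‖ - y / ‖y‖)`, bounded by `2 ‖x - y‖` since `|g ‖y‖| ≤ ‖y‖`.
Finally `3 ≤ 1 + 64 / √255` because `√255 ≤ 32`.
-/

open Set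

section RadialMap

variable {E : Type*} [NormedAddCommGroup E] [NormedSpace ℝ E]

/-- No case split at `z = 0` is needed: there `(g 0 / 0) • 0 = 0`. -/
noncomputable def radialMap (g : ℝ → ℝ) (z : E) : E := (g ‖z‖ / ‖z‖) • z

lemma radialMap_eq_smul_inv_norm_smul (g : ℝ → ℝ) (z : E) :
    radialMap g z = g ‖z‖ • ‖z‖⁻¹ • z := by
  rw [radialMap, div_eq_mul_inv, mul_smul]

lemma norm_inv_norm_smul_le_one (x : E) : ‖‖x‖⁻¹ • x‖ ≤ 1 := by
  rcases eq_or_ne x 0 with rfl | hx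
  · simp
  · exact (norm_smul_inv_norm hx).le

lemma norm_mul_norm_inv_smul_sub_inv_smul_le {x y : E} (h : ‖y‖ ≤ ‖x‖) :
    ‖y‖ * ‖‖x‖⁻¹ • x - ‖y‖⁻¹ • y‖ ≤ 2 * ‖x - y‖ := by
  rcases eq_or_ne y 0 with rfl | hy
  · simp
  have hy' : ‖y‖ ≠ 0 := norm_ne_zero_iff.mpr hy
  have hx : 0 < ‖x‖ := (norm_pos_iff.mpr hy).trans_le h
  have hratio : ‖y‖ / ‖x‖ ≤ 1 := (div_le_one hx).mpr h
  have hsplit : ‖y‖ • (‖x‖⁻¹ • x - ‖y‖⁻¹ • y) = (x - y) - (1 - ‖y‖ / ‖x‖) • x := by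
    rw [smul_sub, smul_inv_smul₀ hy', smul_smul, sub_smul, one_smul, div_eq_mul_inv]
    abel
  calc ‖y‖ * ‖‖x‖⁻¹ • x - ‖y‖⁻¹ • y‖
      = ‖(x - y) - (1 - ‖y‖ / ‖x‖) • x‖ := by rw [← hsplit, norm_smul, norm_norm]
    _ ≤ ‖x - y‖ + (1 - ‖y‖ / ‖x‖) * ‖x‖ := by
      refine (norm_sub_le _ _).trans_eq ?_
      rw [norm_smul, Real.norm_of_nonneg (by linarith)]
    _ = ‖x - y‖ + (‖x‖ - ‖y‖) := by field_simp
    _ ≤ 2 * ‖x - y‖ := by linarith [norm_sub_norm_le x y]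

variable {g : ℝ → ℝ}

lemma abs_le_of_lipschitzOnWith_Ici (hg : LipschitzOnWith 1 g (Ici 0)) (hg0 : g 0 = 0)
    {r : ℝ} (hr : 0 ≤ r) : |g r| ≤ r := by
  simpa [hg0, Real.dist_eq, abs_of_nonneg hr] using
    hg.dist_le_mul r hr 0 self_mem_Ici

lemma norm_radialMap_sub_le_of_norm_le (hg : LipschitzOnWith 1 g (Ici 0)) (hg0 : g 0 = 0)
    {x y : E} (h : ‖y‖ ≤ ‖x‖) :
    ‖radialMap g x - radialMap g y‖ ≤ 3 * ‖x - y‖ := by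
  have hsplit : radialMap g x - radialMap g y =
      (g ‖x‖ - g ‖y‖) • ‖x‖⁻¹ • x + g ‖y‖ • (‖x‖⁻¹ • x - ‖y‖⁻¹ • y) := by
    simp only [radialMap_eq_smul_inv_norm_smul, sub_smul, smul_sub]
    abel
  have hradial : ‖(g ‖x‖ - g ‖y‖) • ‖x‖⁻¹ • x‖ ≤ ‖x - y‖ := by
    rw [norm_smul]
    calc ‖g ‖x‖ - g ‖y‖‖ * ‖‖x‖⁻¹ • x‖ ≤ |‖x‖ - ‖y‖| * 1 := by
          gcongr
          · simpa [Real.dist_eq] using hg.dist_le_mul _ (norm_nonneg x) _ (norm_nonneg y)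
          · exact norm_inv_norm_smul_le_one x
      _ ≤ ‖x - y‖ := by rw [mul_one]; exact abs_norm_sub_norm_le x y
  have hangular : ‖g ‖y‖ • (‖x‖⁻¹ • x - ‖y‖⁻¹ • y)‖ ≤ 2 * ‖x - y‖ := by
    rw [norm_smul, Real.norm_eq_abs]
    calc |g ‖y‖| * ‖‖x‖⁻¹ • x - ‖y‖⁻¹ • y‖ ≤ ‖y‖ * ‖‖x‖⁻¹ • x - ‖y‖⁻¹ • y‖ := by
          gcongr; exact abs_le_of_lipschitzOnWith_Ici hg hg0 (norm_nonneg y)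
      _ ≤ 2 * ‖x - y‖ := norm_mul_norm_inv_smul_sub_inv_smul_le h
  rw [hsplit]
  linarith [norm_add_le ((g ‖x‖ - g ‖y‖) • ‖x‖⁻¹ • x) (g ‖y‖ • (‖x‖⁻¹ • x - ‖y‖⁻¹ • y))]

lemma lipschitzWith_radialMap (hg : LipschitzOnWith 1 g (Ici 0)) (hg0 : g 0 = 0) :
    LipschitzWith 3 (radialMap g : E → E) := by
  refine LipschitzWith.of_dist_le_mul fun x y => ?_
  simp only [dist_eq_norm, NNReal.coe_ofNat]
  rcases le_total ‖y‖ ‖x‖ with h | h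
  · exact norm_radialMap_sub_le_of_norm_le hg hg0 h
  · rw [norm_sub_rev, norm_sub_rev x]
    exact norm_radialMap_sub_le_of_norm_le hg hg0 h

end RadialMap

lemma sqrt_sq_add_sq_le_add_abs_sub (a x y : ℝ) :
    √(a ^ 2 + x ^ 2) ≤ √(a ^ 2 + y ^ 2) + |x - y| := by
  have hy : |y| ≤ √(a ^ 2 + y ^ 2) := Real.abs_le_sqrt (by nlinarith)
  have hsq : √(a ^ 2 + y ^ 2) ^ 2 = a ^ 2 + y ^ 2 := Real.sq_sqrt (by positivity)
  have hcross : y * (x - y) ≤ |y| * |x - y| := by rw [← abs_mul]; exact le_abs_self _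
  rw [Real.sqrt_le_iff]
  refine ⟨by positivity, ?_⟩
  nlinarith [abs_nonneg (x - y), sq_abs (x - y)]

lemma lipschitzWith_max_sqrt_sq_add_sq_sub (a c : ℝ) :
    LipschitzWith 1 fun r : ℝ => max (√(a ^ 2 + r ^ 2) - c) 0 := by
  refine LipschitzWith.of_le_add fun x y => max_le ?_ (by positivity)
  rw [Real.dist_eq]
  linarith [sqrt_sq_add_sq_le_add_abs_sub a x y, le_max_left (√(a ^ 2 + y ^ 2) - c) 0]

lemma three_le_one_add_sixtyFour_div_sqrt_255 : (3 : ℝ) ≤ 1 + 64 / √255 := by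
  have hpos : 0 < √255 := by positivity
  have hle : √255 ≤ 32 := Real.sqrt_le_iff.mpr ⟨by norm_num, by norm_num⟩
  have : (2 : ℝ) ≤ 64 / √255 := by rw [le_div_iff₀ hpos]; linarith
  linarith

open Classical in
theorem stmt0_general (n : ℕ) (δ ε : ℝ)
    (hε0 : 0 < ε) (hε : ε < δ / 8)
    (G : EuclideanSpace ℝ (Fin n) → EuclideanSpace ℝ (Fin n))
    (hG : ∀ z, G z = if z = 0 then 0 else
      ((max (Real.sqrt (ε ^ 2 + ‖z‖ ^ 2) - 2 * δ) 0) / ‖z‖) • z) :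
    ∀ z₁ z₂, ‖G z₁ - G z₂‖ ≤ (1 + 64 / Real.sqrt 255) * ‖z₁ - z₂‖ := by
  set g : ℝ → ℝ := fun r => max (√(ε ^ 2 + r ^ 2) - 2 * δ) 0
  have hg0 : g 0 = 0 := by
    simp only [g]
    rw [zero_pow two_ne_zero, add_zero, Real.sqrt_sq hε0.le]
    exact max_eq_right (by linarith)
  have hG_eq : G = radialMap g := funext fun z => by
    rw [hG, radialMap]
    split_ifs with hz
    · simp [hz]
    · rfl
  intro z₁ z₂
  calc ‖G z₁ - G z₂‖ ≤ 3 * ‖z₁ - z₂‖ := by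
        rw [hG_eq]
        have hlip := lipschitzWith_radialMap (E := EuclideanSpace ℝ (Fin n))
          (lipschitzWith_max_sqrt_sq_add_sq_sub ε (2 * δ)).lipschitzOnWith hg0
        simpa using hlip.norm_sub_le z₁ z₂
    _ ≤ (1 + 64 / Real.sqrt 255) * ‖z₁ - z₂‖ := by
        gcongr; exact three_le_one_add_sixtyFour_div_sqrt_255

open Classical in
theorem stmt0 (n : ℕ) (hn : 2 ≤ n) (δ ε : ℝ) (hδ0 : 0 < δ) (hδ1 : δ < 1)
    (hε0 : 0 < ε) (hε : ε < δ / 8)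
    (G : EuclideanSpace ℝ (Fin n) → EuclideanSpace ℝ (Fin n))
    (hG : ∀ z, G z = if z = 0 then 0 else
      ((max (Real.sqrt (ε ^ 2 + ‖z‖ ^ 2) - 2 * δ) 0) / ‖z‖) • z) :
    ∀ z₁ z₂, ‖G z₁ - G z₂‖ ≤ (1 + 64 / Real.sqrt 255) * ‖z₁ - z₂‖ :=
  stmt0_general n δ ε hε0 hε G hG
end

section
/- Fix p ∈ (1, ∞) and ε ∈ [0, 1), and define G_{p,ε} : ℝⁿ → ℝⁿ by G_{p,ε}(z) = (ε² + |z|²)^{(p−1)/2} z. Then there exists c(p) > 0 such that for all z₁, z₂ ∈ ℝⁿ: |G_{p,ε}(z₁) − G_{p,ε}(z₂)| ≥ c(p) · max{|z₁|^{p−1}, |z₂|^{p−1}} · |z₁ − z₂|. -/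
open scoped RealInnerProductSpace

private lemma scalar_key (s r a b t M : ℝ) (hr : 0 ≤ r) (hrs : r ≤ s)
    (hM0 : 0 ≤ M) (hMa : M ≤ a) (hb0 : 0 ≤ b) (hba : b ≤ a)
    (ht : |t| ≤ s * r) :
    (1/2) * M * (s^2 + r^2 - 2*t) ≤ a*s^2 + b*r^2 - (a+b)*t := by
  have h1 : t ≤ s * r := (abs_le.mp ht).2
  nlinarith [mul_nonneg (by linarith : (0:ℝ) ≤ a + b - M) (by linarith : (0:ℝ) ≤ s*r - t),
    mul_nonneg (by linarith : (0:ℝ) ≤ a - M) (sq_nonneg (s - r)),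
    mul_nonneg (mul_nonneg (by linarith : (0:ℝ) ≤ a - b) hr) (by linarith : (0:ℝ) ≤ s - r),
    mul_nonneg hM0 (sq_nonneg (s - r))]

private lemma half_main (p : ℝ) (hp : 1 < p) (n : ℕ) (ε : ℝ) (hε : 0 ≤ ε)
    (z₁ z₂ : EuclideanSpace ℝ (Fin n)) (hle : ‖z₂‖ ≤ ‖z₁‖) :
    (1/2) * ‖z₁‖ ^ (p - 1) * ‖z₁ - z₂‖ ≤
      ‖((ε ^ 2 + ‖z₁‖ ^ 2) ^ ((p - 1) / 2)) • z₁ -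
        ((ε ^ 2 + ‖z₂‖ ^ 2) ^ ((p - 1) / 2)) • z₂‖ := by
  set s := ‖z₁‖ with hsdef
  set r := ‖z₂‖ with hrdef
  set a := (ε ^ 2 + s ^ 2) ^ ((p - 1) / 2) with hadef
  set b := (ε ^ 2 + r ^ 2) ^ ((p - 1) / 2) with hbdef
  have hs0 : 0 ≤ s := norm_nonneg _
  have hr0 : 0 ≤ r := norm_nonneg _
  have hexp0 : (0:ℝ) ≤ (p - 1) / 2 := by linarith
  have hM0 : (0:ℝ) ≤ s ^ (p - 1) := Real.rpow_nonneg hs0 _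
  have hsq : (s ^ 2 : ℝ) ^ ((p - 1) / 2) = s ^ (p - 1) := by
    rw [← Real.rpow_natCast s 2, ← Real.rpow_mul hs0]
    norm_num
    congr 1
    ring
  have hMa : s ^ (p - 1) ≤ a := by
    rw [← hsq]
    exact Real.rpow_le_rpow (sq_nonneg s) (by nlinarith) hexp0
  have hb0 : (0:ℝ) ≤ b := Real.rpow_nonneg (by positivity) _
  have hba : b ≤ a :=
    Real.rpow_le_rpow (by positivity) (by nlinarith) hexp0
  have ht : |⟪z₁, z₂⟫| ≤ s * r := abs_real_inner_le_norm z₁ z₂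
  have hexp : ⟪a • z₁ - b • z₂, z₁ - z₂⟫ =
      a * s^2 + b * r^2 - (a + b) * ⟪z₁, z₂⟫ := by
    simp only [inner_sub_left, inner_sub_right, real_inner_smul_left,
      real_inner_self_eq_norm_sq, real_inner_comm z₂ z₁]
    ring
  have hns : ‖z₁ - z₂‖ ^ 2 = s^2 + r^2 - 2 * ⟪z₁, z₂⟫ := by
    rw [norm_sub_sq_real]; ring
  have key : (1/2) * s ^ (p - 1) * ‖z₁ - z₂‖ ^ 2 ≤
      ⟪a • z₁ - b • z₂, z₁ - z₂⟫ := by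
    rw [hexp, hns]
    exact scalar_key s r a b _ _ hr0 hle hM0 hMa hb0 hba ht
  have hcs : ⟪a • z₁ - b • z₂, z₁ - z₂⟫ ≤ ‖a • z₁ - b • z₂‖ * ‖z₁ - z₂‖ :=
    real_inner_le_norm _ _
  rcases eq_or_lt_of_le (norm_nonneg (z₁ - z₂)) with h0 | h0
  · rw [← h0, mul_zero]
    exact norm_nonneg _
  · have : (1/2) * s ^ (p - 1) * ‖z₁ - z₂‖ * ‖z₁ - z₂‖ ≤
        ‖a • z₁ - b • z₂‖ * ‖z₁ - z₂‖ := by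
      calc (1/2) * s ^ (p - 1) * ‖z₁ - z₂‖ * ‖z₁ - z₂‖
          = (1/2) * s ^ (p - 1) * ‖z₁ - z₂‖ ^ 2 := by ring
        _ ≤ _ := le_trans key hcs
    exact le_of_mul_le_mul_right this h0

theorem stmt7 (p : ℝ) (hp : 1 < p) :
    ∃ c : ℝ, 0 < c ∧ ∀ (n : ℕ) (ε : ℝ), 0 ≤ ε → ε < 1 →
      ∀ z₁ z₂ : EuclideanSpace ℝ (Fin n),
        c * max (‖z₁‖ ^ (p - 1)) (‖z₂‖ ^ (p - 1)) * ‖z₁ - z₂‖ ≤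
          ‖((ε ^ 2 + ‖z₁‖ ^ 2) ^ ((p - 1) / 2)) • z₁ -
            ((ε ^ 2 + ‖z₂‖ ^ 2) ^ ((p - 1) / 2)) • z₂‖ := by
  refine ⟨1/2, by norm_num, fun n ε hε _ z₁ z₂ => ?_⟩
  have hexp0 : (0:ℝ) ≤ p - 1 := by linarith
  rcases le_total ‖z₂‖ ‖z₁‖ with hle | hle
  · have hmax : max (‖z₁‖ ^ (p - 1)) (‖z₂‖ ^ (p - 1)) = ‖z₁‖ ^ (p - 1) :=
      max_eq_left (Real.rpow_le_rpow (norm_nonneg _) hle hexp0)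
    rw [hmax]
    exact half_main p hp n ε hε z₁ z₂ hle
  · have hmax : max (‖z₁‖ ^ (p - 1)) (‖z₂‖ ^ (p - 1)) = ‖z₂‖ ^ (p - 1) :=
      max_eq_right (Real.rpow_le_rpow (norm_nonneg _) hle hexp0)
    rw [hmax, norm_sub_rev z₁ z₂, show ((ε ^ 2 + ‖z₁‖ ^ 2) ^ ((p - 1) / 2)) • z₁ -
        ((ε ^ 2 + ‖z₂‖ ^ 2) ^ ((p - 1) / 2)) • z₂ =
        -(((ε ^ 2 + ‖z₂‖ ^ 2) ^ ((p - 1) / 2)) • z₂ -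
          ((ε ^ 2 + ‖z₁‖ ^ 2) ^ ((p - 1) / 2)) • z₁) by abel, norm_neg]
    exact half_main p hp n ε hε z₂ z₁ hle
end
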